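/- Let v, ω₁, ω₂ be weights, 1 < p₁, p₂ < ∞, 1/p = 1/p₁ + 1/p₂. If (v, ω₁, ω₂) satisfies the bilinear martingale A_{p⃗} condition, then the bilinear maximal operator M(f,g) = sup_n |E_n f||E_n g| maps L^{p₁}(ω₁) × L^{p₂}(ω₂) boundedly into weak-L^p(v): ‖M(f,g)‖_{L^{p,∞}(v)} ≤ C ‖f‖_{L^{p₁}(ω₁)} ‖g‖_{L^{p₂}(ω₂)}. -/

import Mathlib

/-!
By the weighted conditional Hölder inequality
`|E_n f| ≤ E_n(|f| ^ p₁ ω₁) ^ (1 / p₁) E_n(σ₁) ^ (1 / p₁')` with `σᵢ = ωᵢ ^ (1 - pᵢ')`, the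
`A_p⃗` condition gives `|E_n f| |E_n g| E_n(v) ^ (1 / p) ≤ C E_n(F₁) ^ (1 / p₁) E_n(F₂) ^ (1 / p₂)`
with `F₁ = |f| ^ p₁ ω₁`, `F₂ = |g| ^ p₂ ω₂`. Split `{M(f, g) > λ}` according to the first `n` with
`|E_n f| |E_n g| > λ`. That piece is `ℱ_n`-measurable, so after raising the bound to the power
`p` the conditional expectations integrate away over it, and Hölder's inequality with exponents
`p₁ / p, p₂ / p`, first in the integral over the piece and then in the sum over `n`, gives
`λ ^ p v({M(f, g) > λ}) ≤ C ^ p (∫ F₁) ^ (p / p₁) (∫ F₂) ^ (p / p₂)`.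
-/

open MeasureTheory Filter ENNReal Function Topology

theorem Real.HolderTriple.div_add_div_eq_one {p q r : ℝ} (h : p.HolderTriple q r) :
    r / p + r / q = 1 := by
  simpa only [inv_div] using h.holderConjugate_div_div.inv_add_inv_eq_one

theorem exists_young_eq_rpow_mul_rpow {p q A B : ℝ} (hpq : p.HolderConjugate q)
    (hA : 0 < A) (hB : 0 < B) :
    ∃ t : ℝ, 0 < t ∧ t ^ p * A / p + t ^ (-q) * B / q = A ^ (1 / p) * B ^ (1 / q) := by
  have hpq' : p * q = p + q := hpq.mul_eq_add
  have hp := hpq.ne_zero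
  have hq := hpq.symm.ne_zero
  have hsum : 1 / p + 1 / q = 1 := by simpa using hpq.inv_add_inv_eq_one
  -- The minimiser balances the two terms: `t ^ p A = t ^ (-q) B`, i.e. `t ^ (p q) = B / A`.
  refine ⟨(B / A) ^ (1 / (p * q)), by positivity, ?_⟩
  have hBA : 0 ≤ B / A := by positivity
  have key : ∀ r : ℝ, (B / A) ^ r = B ^ r * A ^ (-r) := fun r => by
    rw [Real.div_rpow hB.le hA.le, Real.rpow_neg hA.le, div_eq_mul_inv]
  have h₁ : ((B / A) ^ (1 / (p * q))) ^ p * A = A ^ (1 / p) * B ^ (1 / q) := by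
    rw [← Real.rpow_mul hBA, key, mul_assoc, ← Real.rpow_add_one hA.ne', mul_comm]
    congr 2 <;> field_simp
    linear_combination hpq'
  have h₂ : ((B / A) ^ (1 / (p * q))) ^ (-q) * B = A ^ (1 / p) * B ^ (1 / q) := by
    rw [← Real.rpow_mul hBA, key, mul_right_comm, ← Real.rpow_add_one hB.ne', mul_comm]
    congr 2 <;> field_simp
    linear_combination hpq'
  rw [h₁, h₂]
  linear_combination (A ^ (1 / p) * B ^ (1 / q)) * hsum

theorem le_rpow_mul_rpow_of_forall_rat_le {p q A B c : ℝ} (hpq : p.HolderConjugate q)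
    (hA : 0 ≤ A) (hB : 0 ≤ B)
    (h : ∀ t : ℚ, 0 < t → c ≤ (t : ℝ) ^ p * A / p + (t : ℝ) ^ (-q) * B / q) :
    c ≤ A ^ (1 / p) * B ^ (1 / q) := by
  have hp := hpq.pos
  have hq := hpq.symm.pos
  -- Shifting `A, B` by `ε > 0` makes the minimum over `t` attained; then let `ε → 0`.
  have hshift : ∀ ε : ℝ, 0 < ε → c ≤ (A + ε) ^ (1 / p) * (B + ε) ^ (1 / q) := by
    intro ε hε
    obtain ⟨t₀, ht₀, heq⟩ := exists_young_eq_rpow_mul_rpow hpq (by positivity : 0 < A + ε)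
      (by positivity : 0 < B + ε)
    rw [← heq]
    have hcont : ContinuousAt (fun t : ℝ => t ^ p * (A + ε) / p + t ^ (-q) * (B + ε) / q) t₀ := by
      fun_prop (disch := exact Or.inl ht₀.ne')
    have := Rat.denseRange_cast (𝕜 := ℝ) |>.nhdsWithin_neBot t₀
    refine ge_of_tendsto
      (hcont.tendsto.mono_left (nhdsWithin_le_nhds (s := Set.range ((↑) : ℚ → ℝ)))) ?_
    filter_upwards [self_mem_nhdsWithin, nhdsWithin_le_nhds (Ioi_mem_nhds ht₀)]
      with s ⟨t, hts⟩ ht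
    subst hts
    have ht' : (0 : ℝ) < t := ht
    refine (h t (by exact_mod_cast ht')).trans ?_
    gcongr <;> linarith
  have hlim : Tendsto (fun ε : ℝ => (A + ε) ^ (1 / p) * (B + ε) ^ (1 / q)) (𝓝[>] 0)
      (𝓝 (A ^ (1 / p) * B ^ (1 / q))) := by
    have : ContinuousAt (fun ε : ℝ => (A + ε) ^ (1 / p) * (B + ε) ^ (1 / q)) 0 := by
      fun_prop (disch := positivity)
    simpa using this.tendsto.mono_left nhdsWithin_le_nhds
  exact ge_of_tendsto hlim (eventually_nhdsWithin_of_forall hshift)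

theorem abs_le_young_weighted {p q w t : ℝ} (hpq : p.HolderConjugate q) (hw : 0 < w) (ht : 0 < t)
    (a : ℝ) : |a| ≤ t ^ p * (|a| ^ p * w) / p + t ^ (-q) * w ^ (-(1 / (p - 1))) / q := by
  have hp := hpq.pos
  have young := Real.young_inequality_of_nonneg (a := t * (|a| * w ^ (1 / p)))
    (b := t⁻¹ * w ^ (-(1 / p))) (by positivity) (by positivity) hpq
  have hprod : t * (|a| * w ^ (1 / p)) * (t⁻¹ * w ^ (-(1 / p))) = |a| := by
    rw [Real.rpow_neg hw.le]
    field_simp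
  have hpow₁ : (t * (|a| * w ^ (1 / p))) ^ p = t ^ p * (|a| ^ p * w) := by
    rw [Real.mul_rpow ht.le (by positivity), Real.mul_rpow (abs_nonneg a) (by positivity),
      ← Real.rpow_mul hw.le, one_div_mul_cancel hp.ne', Real.rpow_one]
  have hpow₂ : (t⁻¹ * w ^ (-(1 / p))) ^ q = t ^ (-q) * w ^ (-(1 / (p - 1))) := by
    rw [Real.mul_rpow (by positivity) (by positivity), Real.inv_rpow ht.le,
      ← Real.rpow_neg ht.le, ← Real.rpow_mul hw.le, hpq.conjugate_eq]
    have := hpq.sub_one_ne_zero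
    congr 2
    field_simp
  rw [hprod, hpow₁, hpow₂] at young
  linarith

theorem ENNReal.tsum_rpow_mul_rpow_le {ι : Type*} (a b : ι → ℝ≥0∞) {θ₁ θ₂ : ℝ}
    (h₁ : 0 ≤ θ₁) (h₂ : 0 ≤ θ₂) (h : θ₁ + θ₂ = 1) :
    ∑' i, a i ^ θ₁ * b i ^ θ₂ ≤ (∑' i, a i) ^ θ₁ * (∑' i, b i) ^ θ₂ := by
  let _ : MeasurableSpace ι := ⊤
  simpa only [lintegral_count] using ENNReal.lintegral_mul_norm_pow_le (μ := Measure.count)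
    (f := a) (g := b) measurable_from_top.aemeasurable measurable_from_top.aemeasurable h₁ h₂ h

theorem lintegral_iUnion_le_of_forall_le {Ω ι : Type*} [MeasurableSpace Ω] [Countable ι]
    {μ : Measure Ω} {A : ι → Set Ω} (hAm : ∀ i, MeasurableSet (A i))
    (hA : Pairwise (Disjoint on A)) {u F G : Ω → ℝ≥0∞} {θ₁ θ₂ : ℝ} (h₁ : 0 ≤ θ₁) (h₂ : 0 ≤ θ₂)
    (h : θ₁ + θ₂ = 1) {c c' : ℝ≥0∞}
    (hpiece : ∀ i, c * ∫⁻ x in A i, u x ∂μ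
      ≤ c' * ((∫⁻ x in A i, F x ∂μ) ^ θ₁ * (∫⁻ x in A i, G x ∂μ) ^ θ₂)) :
    c * ∫⁻ x in ⋃ i, A i, u x ∂μ ≤ c' * ((∫⁻ x, F x ∂μ) ^ θ₁ * (∫⁻ x, G x ∂μ) ^ θ₂) :=
  calc c * ∫⁻ x in ⋃ i, A i, u x ∂μ = ∑' i, c * ∫⁻ x in A i, u x ∂μ := by
        rw [lintegral_iUnion hAm hA, ENNReal.tsum_mul_left]
    _ ≤ ∑' i, c' * ((∫⁻ x in A i, F x ∂μ) ^ θ₁ * (∫⁻ x in A i, G x ∂μ) ^ θ₂) :=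
        ENNReal.tsum_le_tsum hpiece
    _ ≤ c' * ((∑' i, ∫⁻ x in A i, F x ∂μ) ^ θ₁ * (∑' i, ∫⁻ x in A i, G x ∂μ) ^ θ₂) := by
        rw [ENNReal.tsum_mul_left]
        exact mul_le_mul_right (ENNReal.tsum_rpow_mul_rpow_le _ _ h₁ h₂ h) c'
    _ ≤ c' * ((∫⁻ x, F x ∂μ) ^ θ₁ * (∫⁻ x, G x ∂μ) ^ θ₂) := by
        rw [← lintegral_iUnion hAm hA, ← lintegral_iUnion hAm hA]
        gcongr <;> exact Measure.restrict_le_self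

theorem mul_rpow_one_div_le_iff_ofReal {t a b c C p p₁ p₂ : ℝ} (ht : 0 ≤ t) (ha : 0 ≤ a)
    (hb : 0 ≤ b) (hc : 0 ≤ c) (hC : 0 ≤ C) (hp : 0 < p) (hp₁ : 0 < p₁) (hp₂ : 0 < p₂) :
    t * a ^ (1 / p) ≤ C * b ^ (1 / p₁) * c ^ (1 / p₂) ↔
      ENNReal.ofReal (t ^ p) * ENNReal.ofReal a
        ≤ ENNReal.ofReal (C ^ p) * (ENNReal.ofReal b ^ (p / p₁) * ENNReal.ofReal c ^ (p / p₂)) := by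
  have hpow : ∀ x r : ℝ, 0 ≤ x → (x ^ (1 / r)) ^ p = x ^ (p / r) := fun x r hx => by
    rw [← Real.rpow_mul hx, one_div_mul_eq_div]
  rw [ENNReal.ofReal_rpow_of_nonneg hb (by positivity),
    ENNReal.ofReal_rpow_of_nonneg hc (by positivity), ← ENNReal.ofReal_mul (by positivity),
    ← ENNReal.ofReal_mul (by positivity), ← ENNReal.ofReal_mul (by positivity),
    ENNReal.ofReal_le_ofReal_iff (by positivity),
    ← Real.rpow_le_rpow_iff (by positivity) (by positivity) hp,
    Real.mul_rpow ht (by positivity), Real.mul_rpow (by positivity) (by positivity),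
    Real.mul_rpow hC (by positivity), hpow a p ha, hpow b p₁ hb, hpow c p₂ hc, div_self hp.ne',
    Real.rpow_one, mul_assoc]

theorem MeasureTheory.Filtration.measurableSet_disjointed {Ω ι : Type*} {m0 : MeasurableSpace Ω}
    [Preorder ι] [LocallyFiniteOrderBot ι] [Countable ι] (ℱ : Filtration ι m0) {s : ι → Set Ω}
    (hs : ∀ i, MeasurableSet[ℱ i] (s i)) (i : ι) : MeasurableSet[ℱ i] (disjointed s i) := by
  rw [disjointed_eq_inter_compl]
  exact (hs i).inter <| .iInter fun j => .iInter fun hj => (ℱ.mono hj.le _ (hs j)).compl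

theorem setOf_ofReal_lt_iSup_ofReal {Ω ι : Type*} {t : ℝ} (ht : 0 ≤ t) (M : ι → Ω → ℝ) :
    {x | ENNReal.ofReal t < ⨆ i, ENNReal.ofReal (M i x)} = ⋃ i, {x | t < M i x} := by
  ext x
  simp [lt_iSup_iff, ENNReal.ofReal_lt_ofReal_iff_of_nonneg ht]

section CondExp

variable {Ω : Type*} {m m0 : MeasurableSpace Ω} {μ : Measure Ω}

theorem ae_abs_condExp_le_young_weighted {f ω : Ω → ℝ} {p q t : ℝ} (hpq : p.HolderConjugate q)
    (hω : ∀ x, 0 < ω x) (ht : 0 < t) (hf : Integrable f μ)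
    (hF : Integrable (fun x => |f x| ^ p * ω x) μ)
    (hσ : Integrable (fun x => ω x ^ (-(1 / (p - 1)))) μ) :
    ∀ᵐ x ∂μ, |μ[f|m] x| ≤ t ^ p * μ[fun y => |f y| ^ p * ω y|m] x / p
      + t ^ (-q) * μ[fun y => ω y ^ (-(1 / (p - 1)))|m] x / q := by
  set F : Ω → ℝ := fun y => |f y| ^ p * ω y
  set σ : Ω → ℝ := fun y => ω y ^ (-(1 / (p - 1)))
  have hmono : μ[(|f|)|m] ≤ᵐ[μ] μ[(t ^ p / p) • F + (t ^ (-q) / q) • σ|m] :=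
    condExp_mono hf.abs ((hF.smul _).add (hσ.smul _)) (ae_of_all _ fun x => by
      simpa [F, σ, mul_div_right_comm] using abs_le_young_weighted hpq (hω x) ht (f x))
  have hlin : μ[(t ^ p / p) • F + (t ^ (-q) / q) • σ|m] =ᵐ[μ]
      (t ^ p / p) • μ[F|m] + (t ^ (-q) / q) • μ[σ|m] :=
    (condExp_add (hF.smul _) (hσ.smul _) m).trans
      ((condExp_smul _ _ m).add (condExp_smul _ _ m))
  filter_upwards [abs_condExp_ae_le_condExp_abs (m := m) f, hmono, hlin] with x habs hle hx
  simp only [hx, Pi.add_apply, Pi.smul_apply, smul_eq_mul] at hle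
  calc |μ[f|m] x| ≤ _ := habs
    _ ≤ _ := hle
    _ = _ := by ring

-- Young's inequality `|f| ≤ t ^ p F / p + t ^ (-q) σ / q` survives conditioning for each fixed
-- `t`; for countably many `t` it holds simultaneously a.e., and minimizing over `t` gives Hölder.
theorem ae_abs_condExp_le_condExp_rpow_mul_condExp_rpow {f ω : Ω → ℝ} {p : ℝ} (hp : 1 < p)
    (hω : ∀ x, 0 < ω x) (hf : Integrable f μ)
    (hF : Integrable (fun x => |f x| ^ p * ω x) μ)
    (hσ : Integrable (fun x => ω x ^ (-(1 / (p - 1)))) μ) :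
    ∀ᵐ x ∂μ, |μ[f|m] x| ≤ μ[fun y => |f y| ^ p * ω y|m] x ^ (1 / p)
      * μ[fun y => ω y ^ (-(1 / (p - 1)))|m] x ^ ((p - 1) / p) := by
  have hpq := Real.HolderConjugate.conjExponent hp
  have hexp : (p - 1) / p = 1 / p.conjExponent := by
    rw [Real.conjExponent, one_div_div]
  have hyoung : ∀ᵐ x ∂μ, ∀ t : ℚ, 0 < t → |μ[f|m] x| ≤
      (t : ℝ) ^ p * μ[fun y => |f y| ^ p * ω y|m] x / p
        + (t : ℝ) ^ (-p.conjExponent) * μ[fun y => ω y ^ (-(1 / (p - 1)))|m] x / p.conjExponent :=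
    ae_all_iff.2 fun t => if ht : 0 < t then
      (ae_abs_condExp_le_young_weighted hpq hω (by exact_mod_cast ht) hf hF hσ).mono
        fun _ hx _ => hx
    else ae_of_all _ fun _ h => absurd h ht
  filter_upwards [hyoung, condExp_nonneg (m := m) (ae_of_all μ fun x =>
      mul_nonneg (Real.rpow_nonneg (abs_nonneg (f x)) p) (hω x).le),
    condExp_nonneg (m := m) (ae_of_all μ fun x => Real.rpow_nonneg (hω x).le (-(1 / (p - 1))))]
    with x hx hF₀ hσ₀
  rw [hexp]
  exact le_rpow_mul_rpow_of_forall_rat_le hpq hF₀ hσ₀ hx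

theorem setLIntegral_ofReal_condExp (hm : m ≤ m0) [SigmaFinite (μ.trim hm)] {f : Ω → ℝ}
    (hf : Integrable f μ) (hf₀ : 0 ≤ᵐ[μ] f) {s : Set Ω} (hs : MeasurableSet[m] s) :
    ∫⁻ x in s, ENNReal.ofReal (μ[f|m] x) ∂μ = ∫⁻ x in s, ENNReal.ofReal (f x) ∂μ := by
  rw [← ofReal_integral_eq_lintegral_ofReal integrable_condExp.integrableOn
      (ae_restrict_of_ae (condExp_nonneg hf₀)),
    ← ofReal_integral_eq_lintegral_ofReal hf.integrableOn (ae_restrict_of_ae hf₀),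
    setIntegral_condExp hm hf hs]

theorem mul_setLIntegral_ofReal_le_of_condExp (hm : m ≤ m0) [SigmaFinite (μ.trim hm)]
    {u F G : Ω → ℝ} (hu : Integrable u μ) (hF : Integrable F μ) (hG : Integrable G μ)
    (hu₀ : 0 ≤ᵐ[μ] u) (hF₀ : 0 ≤ᵐ[μ] F) (hG₀ : 0 ≤ᵐ[μ] G) {θ₁ θ₂ : ℝ} (h₁ : 0 ≤ θ₁)
    (h₂ : 0 ≤ θ₂) (h : θ₁ + θ₂ = 1) {c c' : ℝ≥0∞} {s : Set Ω} (hs : MeasurableSet[m] s)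
    (hle : ∀ᵐ x ∂μ, x ∈ s → c * ENNReal.ofReal (μ[u|m] x)
      ≤ c' * (ENNReal.ofReal (μ[F|m] x) ^ θ₁ * ENNReal.ofReal (μ[G|m] x) ^ θ₂)) :
    c * ∫⁻ x in s, ENNReal.ofReal (u x) ∂μ
      ≤ c' * ((∫⁻ x in s, ENNReal.ofReal (F x) ∂μ) ^ θ₁
        * (∫⁻ x in s, ENNReal.ofReal (G x) ∂μ) ^ θ₂) := by
  have hmeas : ∀ f : Ω → ℝ, Measurable fun x => ENNReal.ofReal (μ[f|m] x) := fun f =>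
    (stronglyMeasurable_condExp.mono hm).measurable.ennreal_ofReal
  rw [← setLIntegral_ofReal_condExp hm hu hu₀ hs, ← setLIntegral_ofReal_condExp hm hF hF₀ hs,
    ← setLIntegral_ofReal_condExp hm hG hG₀ hs, ← lintegral_const_mul c (hmeas u)]
  calc ∫⁻ x in s, c * ENNReal.ofReal (μ[u|m] x) ∂μ
      ≤ ∫⁻ x in s, c' * (ENNReal.ofReal (μ[F|m] x) ^ θ₁ * ENNReal.ofReal (μ[G|m] x) ^ θ₂) ∂μ :=
        lintegral_mono_ae ((ae_restrict_iff' (hm s hs)).2 hle)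
    _ ≤ _ := by
        have hprod : Measurable fun x =>
            ENNReal.ofReal (μ[F|m] x) ^ θ₁ * ENNReal.ofReal (μ[G|m] x) ^ θ₂ :=
          ((hmeas F).pow_const θ₁).mul ((hmeas G).pow_const θ₂)
        rw [lintegral_const_mul c' hprod]
        exact mul_le_mul_right (ENNReal.lintegral_mul_norm_pow_le (hmeas F).aemeasurable
          (hmeas G).aemeasurable h₁ h₂ h) c'

end CondExp

section BilinearMaximal

variable {Ω : Type*} {m m0 : MeasurableSpace Ω} {μ : Measure Ω} {v ω₁ ω₂ f g : Ω → ℝ}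
  {p p₁ p₂ C : ℝ}

theorem ae_abs_condExp_mul_abs_condExp_mul_rpow_le (hp₁ : 1 < p₁) (hp₂ : 1 < p₂)
    (hv : 0 ≤ᵐ[μ] v) (hω₁ : ∀ x, 0 < ω₁ x) (hω₂ : ∀ x, 0 < ω₂ x)
    (hσ₁ : Integrable (fun x => ω₁ x ^ (-(1 / (p₁ - 1)))) μ)
    (hσ₂ : Integrable (fun x => ω₂ x ^ (-(1 / (p₂ - 1)))) μ)
    (hA : ∀ᵐ x ∂μ, μ[v|m] x ^ (1 / p)
        * μ[fun y => ω₁ y ^ (-(1 / (p₁ - 1)))|m] x ^ ((p₁ - 1) / p₁)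
        * μ[fun y => ω₂ y ^ (-(1 / (p₂ - 1)))|m] x ^ ((p₂ - 1) / p₂) ≤ C)
    (hf : Integrable f μ) (hF₁ : Integrable (fun x => |f x| ^ p₁ * ω₁ x) μ)
    (hg : Integrable g μ) (hF₂ : Integrable (fun x => |g x| ^ p₂ * ω₂ x) μ) :
    ∀ᵐ x ∂μ, |μ[f|m] x| * |μ[g|m] x| * μ[v|m] x ^ (1 / p)
      ≤ C * μ[fun y => |f y| ^ p₁ * ω₁ y|m] x ^ (1 / p₁)
        * μ[fun y => |g y| ^ p₂ * ω₂ y|m] x ^ (1 / p₂) := by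
  have hpos : ∀ {h : Ω → ℝ}, 0 ≤ᵐ[μ] h → ∀ r : ℝ, ∀ᵐ x ∂μ, 0 ≤ μ[h|m] x ^ r :=
    fun hh r => (condExp_nonneg hh).mono fun x hx => Real.rpow_nonneg hx r
  filter_upwards [ae_abs_condExp_le_condExp_rpow_mul_condExp_rpow hp₁ hω₁ hf hF₁ hσ₁,
    ae_abs_condExp_le_condExp_rpow_mul_condExp_rpow hp₂ hω₂ hg hF₂ hσ₂, hA, hpos hv (1 / p),
    hpos (ae_of_all μ fun x => mul_nonneg (Real.rpow_nonneg (abs_nonneg (f x)) p₁) (hω₁ x).le)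
      (1 / p₁),
    hpos (ae_of_all μ fun x => mul_nonneg (Real.rpow_nonneg (abs_nonneg (g x)) p₂) (hω₂ x).le)
      (1 / p₂),
    hpos (ae_of_all μ fun x => Real.rpow_nonneg (hω₁ x).le (-(1 / (p₁ - 1)))) ((p₁ - 1) / p₁),
    hpos (ae_of_all μ fun x => Real.rpow_nonneg (hω₂ x).le (-(1 / (p₂ - 1)))) ((p₂ - 1) / p₂)]
    with x hf' hg' hA' hV hB₁ hB₂ hS₁ hS₂
  calc |μ[f|m] x| * |μ[g|m] x| * μ[v|m] x ^ (1 / p)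
      ≤ (μ[fun y => |f y| ^ p₁ * ω₁ y|m] x ^ (1 / p₁)
          * μ[fun y => ω₁ y ^ (-(1 / (p₁ - 1)))|m] x ^ ((p₁ - 1) / p₁))
        * (μ[fun y => |g y| ^ p₂ * ω₂ y|m] x ^ (1 / p₂)
          * μ[fun y => ω₂ y ^ (-(1 / (p₂ - 1)))|m] x ^ ((p₂ - 1) / p₂))
        * μ[v|m] x ^ (1 / p) := by gcongr
    _ = (μ[v|m] x ^ (1 / p)
          * μ[fun y => ω₁ y ^ (-(1 / (p₁ - 1)))|m] x ^ ((p₁ - 1) / p₁)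
          * μ[fun y => ω₂ y ^ (-(1 / (p₂ - 1)))|m] x ^ ((p₂ - 1) / p₂))
        * (μ[fun y => |f y| ^ p₁ * ω₁ y|m] x ^ (1 / p₁)
          * μ[fun y => |g y| ^ p₂ * ω₂ y|m] x ^ (1 / p₂)) := by ring
    _ ≤ C * (μ[fun y => |f y| ^ p₁ * ω₁ y|m] x ^ (1 / p₁)
          * μ[fun y => |g y| ^ p₂ * ω₂ y|m] x ^ (1 / p₂)) := by gcongr
    _ = _ := by ring

theorem mul_setLIntegral_le_of_le_abs_condExp_mul_abs_condExp (hm : m ≤ m0)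
    [SigmaFinite (μ.trim hm)] (hp₁ : 1 < p₁) (hp₂ : 1 < p₂) (hp : p₁.HolderTriple p₂ p)
    (hC : 0 ≤ C) (hv : 0 ≤ᵐ[μ] v) (hvI : Integrable v μ) (hω₁ : ∀ x, 0 < ω₁ x)
    (hω₂ : ∀ x, 0 < ω₂ x) (hσ₁ : Integrable (fun x => ω₁ x ^ (-(1 / (p₁ - 1)))) μ)
    (hσ₂ : Integrable (fun x => ω₂ x ^ (-(1 / (p₂ - 1)))) μ)
    (hA : ∀ᵐ x ∂μ, μ[v|m] x ^ (1 / p)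
        * μ[fun y => ω₁ y ^ (-(1 / (p₁ - 1)))|m] x ^ ((p₁ - 1) / p₁)
        * μ[fun y => ω₂ y ^ (-(1 / (p₂ - 1)))|m] x ^ ((p₂ - 1) / p₂) ≤ C)
    (hf : Integrable f μ) (hF₁ : Integrable (fun x => |f x| ^ p₁ * ω₁ x) μ)
    (hg : Integrable g μ) (hF₂ : Integrable (fun x => |g x| ^ p₂ * ω₂ x) μ) {t : ℝ} (ht : 0 ≤ t)
    {s : Set Ω} (hs : MeasurableSet[m] s) (hts : ∀ x ∈ s, t ≤ |μ[f|m] x| * |μ[g|m] x|) :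
    ENNReal.ofReal (t ^ p) * ∫⁻ x in s, ENNReal.ofReal (v x) ∂μ
      ≤ ENNReal.ofReal (C ^ p)
        * ((∫⁻ x in s, ENNReal.ofReal (|f x| ^ p₁ * ω₁ x) ∂μ) ^ (p / p₁)
          * (∫⁻ x in s, ENNReal.ofReal (|g x| ^ p₂ * ω₂ x) ∂μ) ^ (p / p₂)) := by
  have hF₁₀ : 0 ≤ᵐ[μ] fun x => |f x| ^ p₁ * ω₁ x :=
    ae_of_all _ fun x => by have := hω₁ x; positivity
  have hF₂₀ : 0 ≤ᵐ[μ] fun x => |g x| ^ p₂ * ω₂ x :=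
    ae_of_all _ fun x => by have := hω₂ x; positivity
  refine mul_setLIntegral_ofReal_le_of_condExp hm hvI hF₁ hF₂ hv hF₁₀ hF₂₀
    (div_nonneg hp.nonneg' hp.nonneg) (div_nonneg hp.nonneg' hp.symm.nonneg)
    hp.div_add_div_eq_one hs ?_
  filter_upwards [ae_abs_condExp_mul_abs_condExp_mul_rpow_le hp₁ hp₂ hv hω₁ hω₂ hσ₁ hσ₂ hA
    hf hF₁ hg hF₂, condExp_nonneg (m := m) hv, condExp_nonneg (m := m) hF₁₀,
    condExp_nonneg (m := m) hF₂₀] with x hx hV hB₁ hB₂ hxs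
  refine (mul_rpow_one_div_le_iff_ofReal ht hV hB₁ hB₂ hC hp.pos' hp.pos hp.symm.pos).1 ?_
  exact (mul_le_mul_of_nonneg_right (hts x hxs) (Real.rpow_nonneg hV _)).trans hx

end BilinearMaximal

theorem stmt_3_general
    {Ω : Type*} {m0 : MeasurableSpace Ω} {μ : Measure Ω} [IsProbabilityMeasure μ]
    (ℱ : Filtration ℕ m0)
    (v ω₁ ω₂ : Ω → ℝ)
    (hv : ∀ x, 0 < v x) (hω₁ : ∀ x, 0 < ω₁ x) (hω₂ : ∀ x, 0 < ω₂ x)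
    (hvI : Integrable v μ)
    (p p₁ p₂ C : ℝ) (hp₁ : 1 < p₁) (hp₂ : 1 < p₂)
    (hp : 1 / p = 1 / p₁ + 1 / p₂) (hC : 0 < C)
    (hσ₁I : Integrable (fun x => ω₁ x ^ (-(1 / (p₁ - 1)))) μ)
    (hσ₂I : Integrable (fun x => ω₂ x ^ (-(1 / (p₂ - 1)))) μ)
    (hA : ∀ n : ℕ, ∀ᵐ x ∂μ,
      (μ[v|ℱ n]) x ^ (1 / p)
        * (μ[fun y => ω₁ y ^ (-(1 / (p₁ - 1)))|ℱ n]) x ^ ((p₁ - 1) / p₁)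
        * (μ[fun y => ω₂ y ^ (-(1 / (p₂ - 1)))|ℱ n]) x ^ ((p₂ - 1) / p₂) ≤ C) :
    ∃ C' : ℝ, 0 < C' ∧
      ∀ f g : Ω → ℝ, Integrable f μ →
        Integrable (fun x => |f x| ^ p₁ * ω₁ x) μ →
        Integrable g μ →
        Integrable (fun x => |g x| ^ p₂ * ω₂ x) μ →
        ∀ lam : ℝ, 0 < lam →
          lam * (∫ x in {x | ENNReal.ofReal lam <
              ⨆ n, ENNReal.ofReal (|(μ[f|ℱ n]) x| * |(μ[g|ℱ n]) x|)}, v x ∂μ) ^ (1 / p)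
            ≤ C' * (∫ x, |f x| ^ p₁ * ω₁ x ∂μ) ^ (1 / p₁)
                * (∫ x, |g x| ^ p₂ * ω₂ x ∂μ) ^ (1 / p₂) := by
  have hp' : p₁.HolderTriple p₂ p :=
    ⟨by simpa only [one_div] using hp.symm, by linarith, by linarith⟩
  refine ⟨C, hC, fun f g hf hF₁ hg hF₂ lam hlam => ?_⟩
  have hv₀ : 0 ≤ᵐ[μ] v := ae_of_all _ fun x => (hv x).le
  set S : ℕ → Set Ω := fun n => {x | lam < |μ[f|ℱ n] x| * |μ[g|ℱ n] x|}
  have hS : ∀ n, MeasurableSet[ℱ n] (S n) := fun n =>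
    stronglyMeasurable_const.measurableSet_lt
      ((continuous_abs.comp_stronglyMeasurable stronglyMeasurable_condExp).mul
        (continuous_abs.comp_stronglyMeasurable stronglyMeasurable_condExp))
  -- `disjointed S n` is where `|E_n f| |E_n g|` first exceeds `lam`.
  have hunion := lintegral_iUnion_le_of_forall_le
    (fun n => ℱ.le n _ (ℱ.measurableSet_disjointed hS n)) (disjoint_disjointed S)
    (div_nonneg hp'.nonneg' hp'.nonneg) (div_nonneg hp'.nonneg' hp'.symm.nonneg)
    hp'.div_add_div_eq_one fun n =>
      mul_setLIntegral_le_of_le_abs_condExp_mul_abs_condExp (ℱ.le n) hp₁ hp₂ hp' hC.le hv₀ hvI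
        hω₁ hω₂ hσ₁I hσ₂I (hA n) hf hF₁ hg hF₂ hlam.le (ℱ.measurableSet_disjointed hS n)
        fun x hx => (disjointed_subset S n hx).le
  have hF₁₀ : 0 ≤ᵐ[μ] fun x => |f x| ^ p₁ * ω₁ x :=
    ae_of_all _ fun x => by have := hω₁ x; positivity
  have hF₂₀ : 0 ≤ᵐ[μ] fun x => |g x| ^ p₂ * ω₂ x :=
    ae_of_all _ fun x => by have := hω₂ x; positivity
  rw [iUnion_disjointed, ← setOf_ofReal_lt_iSup_ofReal hlam.le,
    ← ofReal_integral_eq_lintegral_ofReal hvI.integrableOn (ae_restrict_of_ae hv₀),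
    ← ofReal_integral_eq_lintegral_ofReal hF₁ hF₁₀,
    ← ofReal_integral_eq_lintegral_ofReal hF₂ hF₂₀] at hunion
  exact (mul_rpow_one_div_le_iff_ofReal hlam.le (integral_nonneg_of_ae (ae_restrict_of_ae hv₀))
    (integral_nonneg_of_ae hF₁₀) (integral_nonneg_of_ae hF₂₀) hC.le hp'.pos' hp'.pos
    hp'.symm.pos).2 hunion

theorem stmt_3
    {Ω : Type*} {m0 : MeasurableSpace Ω} {μ : Measure Ω} [IsProbabilityMeasure μ]
    (ℱ : Filtration ℕ m0)
    (v ω₁ ω₂ : Ω → ℝ)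
    (hv : ∀ x, 0 < v x) (hω₁ : ∀ x, 0 < ω₁ x) (hω₂ : ∀ x, 0 < ω₂ x)
    (hvI : Integrable v μ) (hω₁I : Integrable ω₁ μ) (hω₂I : Integrable ω₂ μ)
    (p p₁ p₂ C : ℝ) (hp₁ : 1 < p₁) (hp₂ : 1 < p₂)
    (hp : 1 / p = 1 / p₁ + 1 / p₂) (hC : 0 < C)
    (hσ₁I : Integrable (fun x => ω₁ x ^ (-(1 / (p₁ - 1)))) μ)
    (hσ₂I : Integrable (fun x => ω₂ x ^ (-(1 / (p₂ - 1)))) μ)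
    (hA : ∀ n : ℕ, ∀ᵐ x ∂μ,
      (μ[v|ℱ n]) x ^ (1 / p)
        * (μ[fun y => ω₁ y ^ (-(1 / (p₁ - 1)))|ℱ n]) x ^ ((p₁ - 1) / p₁)
        * (μ[fun y => ω₂ y ^ (-(1 / (p₂ - 1)))|ℱ n]) x ^ ((p₂ - 1) / p₂) ≤ C) :
    ∃ C' : ℝ, 0 < C' ∧
      ∀ f g : Ω → ℝ, Integrable f μ →
        Integrable (fun x => |f x| ^ p₁ * ω₁ x) μ →
        Integrable g μ →
        Integrable (fun x => |g x| ^ p₂ * ω₂ x) μ →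
        ∀ lam : ℝ, 0 < lam →
          lam * (∫ x in {x | ENNReal.ofReal lam <
              ⨆ n, ENNReal.ofReal (|(μ[f|ℱ n]) x| * |(μ[g|ℱ n]) x|)}, v x ∂μ) ^ (1 / p)
            ≤ C' * (∫ x, |f x| ^ p₁ * ω₁ x ∂μ) ^ (1 / p₁)
                * (∫ x, |g x| ^ p₂ * ω₂ x ∂μ) ^ (1 / p₂) :=
  stmt_3_general ℱ v ω₁ ω₂ hv hω₁ hω₂ hvI p p₁ p₂ C hp₁ hp₂ hp hC hσ₁I hσ₂I hA
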